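/- (RC-EOS formula for E.) Let (ρ_L, p_L), (ρ_R, p_R) be pairs of positive reals with ρ_L/p_L ≠ ρ_R/p_R. For K ∈ {L,R} set θ_K = p_K/ρ_K, z₂,K = ρ_K/p_K, h_K = 2(6θ_K² + 4θ_K + 1)/(3θ_K + 2), S_K = −ln ρ_K + (3/2)ln θ_K + (3/2)ln(3θ_K + 2) − 3/(3θ_K + 2), and W₁,K = z₂,K h_K − S_K. Then E := (W₁,R − W₁,L − (ln ρ_R − ln ρ_L))/(z₂,R − z₂,L) = 1 + 3/{{z₂}}_ln − 3/{{2z₂+3}}_ln, where {{z₂}}_ln = (z₂,R − z₂,L)/(ln z₂,R − ln z₂,L) and {{2z₂+3}}_ln = (2z₂,R − 2z₂,L)/(ln(2z₂,R+3) − ln(2z₂,L+3)). -/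
import Mathlib

lemma rc_side (ρ p : ℝ) (hρ : 0 < ρ) (hp : 0 < p) :
    (ρ/p) * (2 * (6 * (p/ρ) ^ 2 + 4 * (p/ρ) + 1) / (3 * (p/ρ) + 2))
      - (-Real.log ρ + (3 / 2) * Real.log (p/ρ) + (3 / 2) * Real.log (3 * (p/ρ) + 2)
        - 3 / (3 * (p/ρ) + 2)) - Real.log ρ
    = (ρ/p) + 4 + 3 * Real.log (ρ/p) - (3/2) * Real.log (2 * (ρ/p) + 3) := by
  set z : ℝ := ρ / p with hzdef
  have hz : 0 < z := div_pos hρ hp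
  have hθ : p / ρ = z⁻¹ := by rw [hzdef, inv_div]
  rw [hθ]
  have h2z3 : (0:ℝ) < 2 * z + 3 := by linarith
  have hA : 3 * z⁻¹ + 2 = (2 * z + 3) / z := by field_simp; ring
  have hlθ : Real.log z⁻¹ = -Real.log z := Real.log_inv z
  have hlA : Real.log (3 * z⁻¹ + 2) = Real.log (2 * z + 3) - Real.log z := by
    rw [hA, Real.log_div h2z3.ne' hz.ne']
  rw [hlθ, hlA, hA]
  have hzne : z ≠ 0 := hz.ne'
  have h2ne : 2 * z + 3 ≠ 0 := h2z3.ne'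
  field_simp
  ring

theorem stmt9 (ρL pL ρR pR : ℝ)
    (hρL : 0 < ρL) (hpL : 0 < pL) (hρR : 0 < ρR) (hpR : 0 < pR)
    (hne : ρL / pL ≠ ρR / pR) :
    let z2L : ℝ := ρL / pL
    let z2R : ℝ := ρR / pR
    let θL : ℝ := pL / ρL
    let θR : ℝ := pR / ρR
    let hL : ℝ := 2 * (6 * θL ^ 2 + 4 * θL + 1) / (3 * θL + 2)
    let hR : ℝ := 2 * (6 * θR ^ 2 + 4 * θR + 1) / (3 * θR + 2)
    let SL : ℝ := -Real.log ρL + (3 / 2) * Real.log θL + (3 / 2) * Real.log (3 * θL + 2)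
      - 3 / (3 * θL + 2)
    let SR : ℝ := -Real.log ρR + (3 / 2) * Real.log θR + (3 / 2) * Real.log (3 * θR + 2)
      - 3 / (3 * θR + 2)
    let W1L : ℝ := z2L * hL - SL
    let W1R : ℝ := z2R * hR - SR
    let lz2 : ℝ := (z2R - z2L) / (Real.log z2R - Real.log z2L)
    let lB : ℝ := (2 * z2R - 2 * z2L) / (Real.log (2 * z2R + 3) - Real.log (2 * z2L + 3))
    (W1R - W1L - (Real.log ρR - Real.log ρL)) / (z2R - z2L)
      = 1 + 3 / lz2 - 3 / lB := by
  intro z2L z2R θL θR hL hR SL SR W1L W1R lz2 lB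
  have hzL : 0 < z2L := div_pos hρL hpL
  have hzR : 0 < z2R := div_pos hρR hpR
  have h2L : (0:ℝ) < 2 * z2L + 3 := by linarith
  have h2R : (0:ℝ) < 2 * z2R + 3 := by linarith
  have hzne : z2R - z2L ≠ 0 := sub_ne_zero.mpr (Ne.symm hne)
  have hlne : Real.log z2R - Real.log z2L ≠ 0 := by
    intro h
    exact hne (Real.log_injOn_pos (Set.mem_Ioi.mpr hzR) (Set.mem_Ioi.mpr hzL)
      (sub_eq_zero.mp h)).symm
  have hbne : Real.log (2 * z2R + 3) - Real.log (2 * z2L + 3) ≠ 0 := by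
    intro h
    have := Real.log_injOn_pos (Set.mem_Ioi.mpr h2R) (Set.mem_Ioi.mpr h2L)
      (sub_eq_zero.mp h)
    apply hne; symm; linarith
  have eL : W1L - Real.log ρL
      = z2L + 4 + 3 * Real.log z2L - (3/2) * Real.log (2 * z2L + 3) := by
    have := rc_side ρL pL hρL hpL
    simp only [W1L, SL, hL, θL, z2L] at *
    linarith
  have eR : W1R - Real.log ρR
      = z2R + 4 + 3 * Real.log z2R - (3/2) * Real.log (2 * z2R + 3) := by
    have := rc_side ρR pR hρR hpR
    simp only [W1R, SR, hR, θR, z2R] at *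
    linarith
  have hnum : W1R - W1L - (Real.log ρR - Real.log ρL)
      = (z2R - z2L) + 3 * (Real.log z2R - Real.log z2L)
        - (3/2) * (Real.log (2 * z2R + 3) - Real.log (2 * z2L + 3)) := by
    linarith
  rw [hnum]
  have h2zne : 2 * z2R - 2 * z2L ≠ 0 := by
    intro h; exact hzne (by linarith)
  simp only [lz2, lB]
  generalize Real.log z2R = a at *
  generalize Real.log z2L = b at *
  generalize Real.log (2 * z2R + 3) = c at *
  generalize Real.log (2 * z2L + 3) = d at *
  field_simp
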